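/- The t-preconditioned Crank–Nicolson (tpCN) proposal transition kernel is reversible with respect to the multivariate t-distribution t_ν(μ_s, C_s): if p_s denotes the density of t_ν(μ_s, C_s) and κ_t(x, x') the tpCN proposal density, then p_s(x)κ_t(x, x') = p_s(x')κ_t(x', x) for all x, x' ∈ ℝ^d. -/

import Mathlib

open Matrix Real MeasureTheory

/-- Multivariate Gaussian density with mean `m` and covariance `S` on `ℝ^d`. -/
noncomputable def gaussPdf (d : ℕ) (m : Fin d → ℝ) (S : Matrix (Fin d) (Fin d) ℝ)
    (x : Fin d → ℝ) : ℝ :=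
  (Real.sqrt ((2 * Real.pi) ^ d * S.det))⁻¹ *
    Real.exp (-(1 / 2) * ((x - m) ⬝ᵥ (S⁻¹ *ᵥ (x - m))))

/-- The inner product `⟨x₁, x₂⟩_s = (x₁ − μ_s)ᵀ C_s⁻¹ (x₂ − μ_s)`. -/
noncomputable def innerS (d : ℕ) (μs : Fin d → ℝ) (Cs : Matrix (Fin d) (Fin d) ℝ)
    (x₁ x₂ : Fin d → ℝ) : ℝ :=
  (x₁ - μs) ⬝ᵥ (Cs⁻¹ *ᵥ (x₂ - μs))

/-- Density of `Z` when `Z⁻¹ ∼ Gamma(shape k, scale θ)`. -/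
noncomputable def invGammaPdf (k θ z : ℝ) : ℝ :=
  if 0 < z then z ^ (-(k + 1)) * Real.exp (-1 / (θ * z)) / (Real.Gamma k * θ ^ k) else 0

/-- The tpCN proposal density from `x` to `x'`: a scale mixture of Gaussians, the
proposal being `x' = μ_s + √(1−ρ²)(x−μ_s) + ρ√Z W` with
`Z⁻¹ ∼ Gamma((d+ν)/2, 2/(ν+⟨x,x⟩_s))` and `W ∼ N(0, C_s)`. -/
noncomputable def tpcnPdf (d : ℕ) (ν : ℝ) (μs : Fin d → ℝ)
    (Cs : Matrix (Fin d) (Fin d) ℝ) (ρ : ℝ) (x x' : Fin d → ℝ) : ℝ :=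
  ∫ z in Set.Ioi (0 : ℝ),
    gaussPdf d (μs + Real.sqrt (1 - ρ ^ 2) • (x - μs)) ((ρ ^ 2 * z) • Cs) x' *
      invGammaPdf (((d : ℝ) + ν) / 2) (2 / (ν + innerS d μs Cs x x)) z

/-- The multivariate `t` density `t_ν(μ_s, C_s)`. -/
noncomputable def tPdf (d : ℕ) (ν : ℝ) (μs : Fin d → ℝ)
    (Cs : Matrix (Fin d) (Fin d) ℝ) (x : Fin d → ℝ) : ℝ :=
  Real.Gamma ((ν + d) / 2) /
      (Real.Gamma (ν / 2) * (ν * Real.pi) ^ ((d : ℝ) / 2) * Real.sqrt Cs.det) *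
    (1 + innerS d μs Cs x x / ν) ^ (-((ν + d) / 2))

/-!
Mixing the Gaussian `N(m, r z S)` against an inverse-gamma law of scale `θ` is a computable
integral after the substitution `z ↦ z⁻¹`. For the tpCN kernel, with `θ(x) = 2/(ν + ⟨x,x⟩_s)` and
`k = (d+ν)/2`, it gives `κ_t(x, x') = c · θ(x)^(-k) · B(x, x')^(-(d/2+k))`, where `B` is symmetric in
`x, x'` because `√(1-ρ²)² + ρ² = 1`. Since `p_s(x) = c' · θ(x)^k`, the product `p_s(x) κ_t(x, x')`
is symmetric.
-/

lemma integral_rpow_neg_sub_one_mul_exp_neg_div_Ioi {c b : ℝ} (hc : 0 < c) (hb : 0 < b) :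
    ∫ z in Set.Ioi (0 : ℝ), z ^ (-c - 1) * exp (-(b / z)) = b ^ (-c) * Gamma c := by
  rw [← integral_comp_rpow_Ioi _ (p := -1) (by norm_num)]
  have h_subst : ∀ t ∈ Set.Ioi (0 : ℝ),
      (|(-1 : ℝ)| * t ^ ((-1 : ℝ) - 1)) • ((t ^ (-1 : ℝ)) ^ (-c - 1) * exp (-(b / t ^ (-1 : ℝ))))
        = t ^ (c - 1) * exp (-(b * t)) := by
    intro t (ht : 0 < t)
    rw [rpow_neg_one, inv_rpow ht.le, ← rpow_neg ht.le, div_inv_eq_mul, smul_eq_mul, abs_neg,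
      abs_one, one_mul, ← mul_assoc, ← rpow_add ht, show (-1 : ℝ) - 1 + -(-c - 1) = c - 1 by ring]
  rw [setIntegral_congr_fun measurableSet_Ioi h_subst, integral_rpow_mul_exp_neg_mul_Ioi hc hb,
    one_div, inv_rpow hb.le, ← rpow_neg hb.le]

lemma innerS_comm {d : ℕ} (μs : Fin d → ℝ) {Cs : Matrix (Fin d) (Fin d) ℝ} (hCs : Cs.IsSymm)
    (x₁ x₂ : Fin d → ℝ) : innerS d μs Cs x₁ x₂ = innerS d μs Cs x₂ x₁ := by
  simpa only [innerS, hCs.inv.eq] using dotProduct_transpose_mulVec Cs⁻¹ (x₁ - μs) (x₂ - μs)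

lemma innerS_self_nonneg {d : ℕ} (μs : Fin d → ℝ) {Cs : Matrix (Fin d) (Fin d) ℝ}
    (hCs : Cs.PosDef) (x : Fin d → ℝ) : 0 ≤ innerS d μs Cs x x :=
  hCs.inv.posSemidef.dotProduct_mulVec_nonneg (x - μs)

lemma gaussPdf_smul {d : ℕ} {S : Matrix (Fin d) (Fin d) ℝ} (hS : 0 < S.det) {t : ℝ} (ht : 0 < t)
    (m y : Fin d → ℝ) :
    gaussPdf d m (t • S) y = (sqrt ((2 * π) ^ d * S.det))⁻¹ * t ^ (-((d : ℝ) / 2)) *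
      exp (-((y - m) ⬝ᵥ (S⁻¹ *ᵥ (y - m)) / (2 * t))) := by
  have : Invertible t := invertibleOfNonzero ht.ne'
  have h_sqrt :
      sqrt ((2 * π) ^ d * (t • S).det) = sqrt ((2 * π) ^ d * S.det) * t ^ ((d : ℝ) / 2) := by
    rw [det_smul, Fintype.card_fin, mul_left_comm, sqrt_mul (by positivity), mul_comm,
      sqrt_eq_rpow (t ^ d), ← rpow_natCast t d, ← rpow_mul ht.le]
    ring_nf
  rw [gaussPdf, h_sqrt, inv_smul S t hS.ne'.isUnit, invOf_eq_inv, smul_mulVec, dotProduct_smul,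
    smul_eq_mul, rpow_neg (by positivity), mul_inv]
  congr 2
  field_simp

lemma integral_gaussPdf_smul_mul_invGammaPdf {d : ℕ} {S : Matrix (Fin d) (Fin d) ℝ}
    (hS : S.PosDef) {r k θ : ℝ} (hr : 0 < r) (hk : 0 < k) (hθ : 0 < θ) (m y : Fin d → ℝ) :
    ∫ z in Set.Ioi (0 : ℝ), gaussPdf d m ((r * z) • S) y * invGammaPdf k θ z =
      Gamma ((d : ℝ) / 2 + k) /
          (sqrt ((2 * π) ^ d * S.det) * r ^ ((d : ℝ) / 2) * Gamma k * θ ^ k) *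
        (((y - m) ⬝ᵥ (S⁻¹ *ᵥ (y - m)) / r + 2 / θ) / 2) ^ (-((d : ℝ) / 2 + k)) := by
  set q := (y - m) ⬝ᵥ (S⁻¹ *ᵥ (y - m))
  have hq : 0 ≤ q := hS.inv.posSemidef.dotProduct_mulVec_nonneg _
  have hb : 0 < (q / r + 2 / θ) / 2 := by positivity
  have h_integrand : ∀ z ∈ Set.Ioi (0 : ℝ), gaussPdf d m ((r * z) • S) y * invGammaPdf k θ z =
      (sqrt ((2 * π) ^ d * S.det))⁻¹ * r ^ (-((d : ℝ) / 2)) / (Gamma k * θ ^ k) *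
        (z ^ (-((d : ℝ) / 2 + k) - 1) * exp (-((q / r + 2 / θ) / 2 / z))) := by
    intro z (hz : 0 < z)
    have h_pow : z ^ (-((d : ℝ) / 2 + k) - 1) = z ^ (-((d : ℝ) / 2)) * z ^ (-(k + 1)) := by
      rw [← rpow_add hz]; ring_nf
    have h_exp : exp (-((q / r + 2 / θ) / 2 / z)) =
        exp (-(q / (2 * (r * z)))) * exp (-1 / (θ * z)) := by
      rw [← exp_add]; congr 1; field_simp; ring
    rw [gaussPdf_smul hS.det_pos (by positivity), invGammaPdf, if_pos hz, mul_rpow hr.le hz.le,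
      h_pow, h_exp]
    ring
  rw [setIntegral_congr_fun measurableSet_Ioi h_integrand, integral_const_mul,
    integral_rpow_neg_sub_one_mul_exp_neg_div_Ioi (by positivity) hb, rpow_neg hr.le]
  ring

lemma dotProduct_mulVec_sub_add_smul {d : ℕ} (μs : Fin d → ℝ) {Cs : Matrix (Fin d) (Fin d) ℝ}
    (hCs : Cs.IsSymm) (s : ℝ) (x x' : Fin d → ℝ) :
    (x' - (μs + s • (x - μs))) ⬝ᵥ (Cs⁻¹ *ᵥ (x' - (μs + s • (x - μs)))) =
      innerS d μs Cs x' x' - 2 * s * innerS d μs Cs x x' + s ^ 2 * innerS d μs Cs x x := by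
  have h_cross := innerS_comm μs hCs x' x
  rw [show x' - (μs + s • (x - μs)) = (x' - μs) - s • (x - μs) by abel]
  unfold innerS at h_cross ⊢
  generalize x - μs = u at h_cross ⊢
  generalize x' - μs = u' at h_cross ⊢
  simp only [mulVec_sub, mulVec_smul, dotProduct_sub, sub_dotProduct, dotProduct_smul,
    smul_dotProduct, smul_eq_mul]
  rw [h_cross]
  ring

lemma tpcnPdf_eq {d : ℕ} {ν : ℝ} (hν : 0 < ν) (μs : Fin d → ℝ) {Cs : Matrix (Fin d) (Fin d) ℝ}
    (hCs : Cs.PosDef) {ρ : ℝ} (hρ : ρ ∈ Set.Ioo (0 : ℝ) 1) (x x' : Fin d → ℝ) :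
    tpcnPdf d ν μs Cs ρ x x' =
      Gamma ((d : ℝ) / 2 + ((d : ℝ) + ν) / 2) /
          (sqrt ((2 * π) ^ d * Cs.det) * (ρ ^ 2) ^ ((d : ℝ) / 2) * Gamma (((d : ℝ) + ν) / 2) *
            (2 / (ν + innerS d μs Cs x x)) ^ (((d : ℝ) + ν) / 2)) *
        ((ν + (innerS d μs Cs x x + innerS d μs Cs x' x'
            - 2 * sqrt (1 - ρ ^ 2) * innerS d μs Cs x x') / ρ ^ 2) / 2)
          ^ (-((d : ℝ) / 2 + ((d : ℝ) + ν) / 2)) := by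
  obtain ⟨hρ0, hρ1⟩ := hρ
  have ha := innerS_self_nonneg μs hCs x
  have hs : sqrt (1 - ρ ^ 2) ^ 2 = 1 - ρ ^ 2 := sq_sqrt (by nlinarith)
  rw [tpcnPdf, integral_gaussPdf_smul_mul_invGammaPdf hCs (by positivity) (by positivity)
    (by positivity), dotProduct_mulVec_sub_add_smul μs (isHermitian_iff_isSymm.mp hCs.isHermitian),
    hs]
  congr 3
  field_simp
  ring

lemma tPdf_eq_mul_rpow {d : ℕ} {ν : ℝ} (hν : 0 < ν) (μs : Fin d → ℝ)
    {Cs : Matrix (Fin d) (Fin d) ℝ} (hCs : Cs.PosDef) (x : Fin d → ℝ) :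
    tPdf d ν μs Cs x =
      Gamma ((ν + d) / 2) / (Gamma (ν / 2) * (ν * π) ^ ((d : ℝ) / 2) * sqrt Cs.det) *
        (ν / 2) ^ (((d : ℝ) + ν) / 2) * (2 / (ν + innerS d μs Cs x x)) ^ (((d : ℝ) + ν) / 2) := by
  have ha := innerS_self_nonneg μs hCs x
  rw [tPdf, mul_assoc (Gamma _ / _), ← mul_rpow (by positivity) (by positivity),
    add_comm ν (d : ℝ), rpow_neg (by positivity), ← inv_rpow (by positivity)]
  congr 2
  field_simp

theorem tpCN_reversible_general (d : ℕ) (ν : ℝ) (hν : 0 < ν)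
    (μs : Fin d → ℝ) (Cs : Matrix (Fin d) (Fin d) ℝ) (hCs : Cs.PosDef)
    (ρ : ℝ) (hρ : ρ ∈ Set.Ioo (0 : ℝ) 1) :
    ∀ x x' : Fin d → ℝ,
      tPdf d ν μs Cs x * tpcnPdf d ν μs Cs ρ x x' =
        tPdf d ν μs Cs x' * tpcnPdf d ν μs Cs ρ x' x := by
  intro x x'
  have hθ : ∀ y, 0 < (2 / (ν + innerS d μs Cs y y)) ^ (((d : ℝ) + ν) / 2) := fun y => by
    have := innerS_self_nonneg μs hCs y
    positivity
  rw [tPdf_eq_mul_rpow hν μs hCs, tPdf_eq_mul_rpow hν μs hCs, tpcnPdf_eq hν μs hCs hρ,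
    tpcnPdf_eq hν μs hCs hρ, innerS_comm μs (isHermitian_iff_isSymm.mp hCs.isHermitian) x' x,
    add_comm (innerS d μs Cs x' x')]
  field_simp [(hθ x).ne', (hθ x').ne']

/-- The tpCN proposal transition kernel is reversible with respect to the
multivariate `t`-distribution `t_ν(μ_s, C_s)`. -/
theorem tpCN_reversible (d : ℕ) (hd : 1 ≤ d) (ν : ℝ) (hν : 0 < ν)
    (μs : Fin d → ℝ) (Cs : Matrix (Fin d) (Fin d) ℝ) (hCs : Cs.PosDef)
    (ρ : ℝ) (hρ : ρ ∈ Set.Ioo (0 : ℝ) 1) :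
    ∀ x x' : Fin d → ℝ,
      tPdf d ν μs Cs x * tpcnPdf d ν μs Cs ρ x x' =
        tPdf d ν μs Cs x' * tpcnPdf d ν μs Cs ρ x' x :=
  tpCN_reversible_general d ν hν μs Cs hCs ρ hρ
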